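/- arXiv:math-ph/0701055 — 2 statements merged into one kernel-verified Lean document; each statement's English description precedes it below -/
import Mathlib

section
/- Let f, φ be Schwartz functions on ℝ. Then lim_{ε→0⁺} ∫∫ (e^{i t x / ε}/ε) f(x) φ(t) dx dt = 2π f(0) φ(0). -/
open MeasureTheory Filter Complex Real FourierTransform

/-- For Schwartz functions `f, φ` on ℝ,
`lim_{ε→0⁺} ∫∫ (e^{itx/ε}/ε) f(x) φ(t) dx dt = 2π f(0) φ(0)`. -/
theorem stmt_0 (f φ : SchwartzMap ℝ ℂ) :
    Tendsto (fun ε : ℝ => ∫ t : ℝ, ∫ x : ℝ,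
        (Complex.exp (Complex.I * t * x / ε) / ε) * f x * φ t)
      (nhdsWithin 0 (Set.Ioi 0))
      (nhds ((2 * Real.pi : ℝ) * f 0 * φ 0)) := by
  set F : ℝ → ℂ := 𝓕 (f : ℝ → ℂ) with hFdef
  have hFint : Integrable F := by
    simpa [hFdef, SchwartzMap.fourier_coe] using (SchwartzMap.fourierTransformCLM ℂ f).integrable (μ := volume)
  have hFcont : Continuous F := by
    have := (SchwartzMap.fourierTransformCLM ℂ f).continuous
    rwa [SchwartzMap.fourierTransformCLM_apply] at this
  have hFneg : ∫ u : ℝ, F (-u) = f 0 := by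
    rw [integral_neg_eq_self]
    have h := MeasureTheory.Integrable.fourierInv_fourier_eq (f := (f : ℝ → ℂ)) f.integrable
      hFint (f.continuous.continuousAt (x := 0))
    rw [Real.fourierInv_eq] at h
    simpa using h
  -- step 1: rewrite inner integral
  have inner_eq : ∀ (ε t : ℝ), 0 < ε →
      ∫ x : ℝ, (Complex.exp (Complex.I * t * x / ε) / ε) * f x * φ t
        = (φ t / ε) * F (-(t / (2 * π * ε))) := by
    intro ε t hε
    rw [hFdef, Real.fourier_eq']
    have h1 : ∀ v : ℝ, (-2 * π * ((inner ℝ v (-(t / (2 * π * ε))) : ℝ))) = t * v / ε := by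
      intro v
      simp only [RCLike.inner_apply, conj_trivial]
      field_simp
    calc ∫ x : ℝ, (Complex.exp (Complex.I * t * x / ε) / ε) * f x * φ t
        = ∫ x : ℝ, (φ t / ε) *
            (Complex.exp ((↑(-2 * π * ((inner ℝ x (-(t / (2 * π * ε))) : ℝ))) * Complex.I)) • f x) := by
          congr 1; ext x
          rw [h1 x, smul_eq_mul]
          rw [show (Complex.I * ↑t * ↑x / ↑ε : ℂ) = ↑(t * x / ε) * Complex.I by push_cast; ring]
          ring_nf
      _ = _ := by rw [integral_const_mul]
  -- step 2: change of variables
  have outer_eq : ∀ ε : ℝ, 0 < ε →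
      (∫ t : ℝ, (φ t / ε) * F (-(t / (2 * π * ε))))
        = (2 * π : ℝ) * ∫ u : ℝ, φ (2 * π * ε * u) * F (-u) := by
    intro ε hε
    set a : ℝ := 2 * π * ε with ha
    have ha0 : 0 < a := by positivity
    set G : ℝ → ℂ := fun t => φ t * F (-(t / a)) with hG
    have h2 : ∀ u : ℝ, G (a * u) = φ (a * u) * F (-u) := by
      intro u
      simp only [hG]
      rw [mul_div_cancel_left₀ _ ha0.ne']
    have h3 : (∫ u : ℝ, G (a * u)) = |a⁻¹| • ∫ t, G t :=
      MeasureTheory.Measure.integral_comp_mul_left G a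
    have h4 : (∫ t : ℝ, G t) = (a : ℂ) * ∫ u : ℝ, φ (a * u) * F (-u) := by
      rw [← integral_congr_ae (Filter.EventuallyEq.of_eq (funext h2)), h3,
        abs_of_pos (inv_pos.2 ha0)]
      rw [Complex.real_smul]
      push_cast
      rw [← mul_assoc, mul_inv_cancel₀ (by exact_mod_cast ha0.ne'), one_mul]
    have h5 : ∀ t : ℝ, (φ t / ε) * F (-(t / a)) = (ε : ℂ)⁻¹ * G t := by
      intro t; simp only [hG]; ring
    calc (∫ t : ℝ, (φ t / ε) * F (-(t / (2 * π * ε))))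
        = ∫ t : ℝ, (ε : ℂ)⁻¹ * G t := by
          refine integral_congr_ae (Filter.EventuallyEq.of_eq (funext ?_))
          intro t; rw [← h5 t]
      _ = (ε : ℂ)⁻¹ * ∫ t, G t := integral_const_mul _ _
      _ = (2 * π : ℝ) * ∫ u : ℝ, φ (a * u) * F (-u) := by
          rw [h4, ← mul_assoc, ha]
          push_cast
          rw [show (↑ε)⁻¹ * (2 * ↑π * ↑ε) = (2 * ↑π : ℂ) * ((↑ε)⁻¹ * ↑ε) by ring,
            inv_mul_cancel₀ (by exact_mod_cast hε.ne'), mul_one]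
  -- step 3: dominated convergence
  obtain C := SchwartzMap.seminorm ℝ 0 0 φ
  have hbound : ∀ x : ℝ, ‖φ x‖ ≤ SchwartzMap.seminorm ℝ 0 0 φ := fun x =>
    SchwartzMap.norm_le_seminorm ℝ φ x
  have key : Tendsto (fun ε : ℝ => ∫ u : ℝ, φ (2 * π * ε * u) * F (-u))
      (nhdsWithin 0 (Set.Ioi 0)) (nhds (∫ u : ℝ, φ 0 * F (-u))) := by
    apply tendsto_integral_filter_of_dominated_convergence
      (fun u => SchwartzMap.seminorm ℝ 0 0 φ * ‖F (-u)‖)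
    · filter_upwards with ε
      exact ((φ.continuous.comp (continuous_const.mul continuous_id)).mul
        (hFcont.comp continuous_neg)).aestronglyMeasurable
    · filter_upwards with ε
      filter_upwards with u
      rw [norm_mul]
      exact mul_le_mul_of_nonneg_right (hbound _) (norm_nonneg _)
    · exact (hFint.comp_neg.norm.const_mul _)
    · filter_upwards with u
      have h1 : Tendsto (fun ε : ℝ => 2 * π * ε * u) (nhdsWithin 0 (Set.Ioi 0)) (nhds 0) := by
        have : Tendsto (fun ε : ℝ => 2 * π * ε * u) (nhds 0) (nhds (2 * π * 0 * u)) :=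
          (continuous_const.mul continuous_id).mul continuous_const |>.tendsto 0
        simpa using this.mono_left nhdsWithin_le_nhds
      exact ((φ.continuous.tendsto 0).comp h1).mul_const _
  have final : Tendsto (fun ε : ℝ => (2 * π : ℝ) * ∫ u : ℝ, φ (2 * π * ε * u) * F (-u))
      (nhdsWithin 0 (Set.Ioi 0)) (nhds ((2 * Real.pi : ℝ) * f 0 * φ 0)) := by
    have h := key.const_mul ((2 * π : ℝ) : ℂ)
    have heq : ((2 * π : ℝ) : ℂ) * ∫ u : ℝ, φ 0 * F (-u) = ((2 * Real.pi : ℝ) : ℂ) * f 0 * φ 0 := by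
      rw [integral_const_mul, hFneg]
      push_cast
      ring
    rwa [heq] at h
  refine final.congr' ?_
  filter_upwards [self_mem_nhdsWithin] with ε (hε : ε ∈ Set.Ioi 0)
  rw [← outer_eq ε hε]
  refine integral_congr_ae (Filter.EventuallyEq.of_eq (funext fun t => ?_))
  exact (inner_eq ε t hε).symm
end

section
/- Let T₁ = |f₁⟩⟨g₁|, …, T_n = |f_n⟩⟨g_n| be rank-one operators on ℓ²(I) with I countable, P_e = |e⟩⟨e|, and n̂ diagonal positive. Then Tr[n̂ (T₁ * T₂ * ⋯ * T_n)] = (2π)^{n−1} ∑_{e∈I} ⟨g_n, P_e n̂ f₁⟩ ⟨g₁, P_e f₂⟩ ⟨g₂, P_e f₃⟩ ⋯ ⟨g_{n−1}, P_e f_n⟩. -/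
open scoped BigOperators ComplexConjugate

variable {I : Type*} [Countable I] [DecidableEq I]

/-- Matrix product of kernels of operators on `ℓ²(I)`. -/
noncomputable def matMul (A B : I → I → ℂ) : I → I → ℂ :=
  fun a b => ∑' c : I, A a c * B c b

/-- The rank-one projection `P_e = |e⟩⟨e|`. -/
def Pmat (e : I) : I → I → ℂ := fun a b => if a = e ∧ b = e then 1 else 0

/-- The low-density-limit product `T * T' = 2π ∑_e P_e T P_e T'`. -/
noncomputable def starProd (T T' : I → I → ℂ) : I → I → ℂ :=
  fun a b =>
    ((2 * Real.pi : ℝ) : ℂ) * ∑' e : I, matMul (matMul (matMul (Pmat e) T) (Pmat e)) T' a b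

/-- The rank-one operator `|f⟩⟨g| : h ↦ ⟨g,h⟩f`, with kernel `f(a) conj(g(b))`. -/
def rankOne (f g : I → ℂ) : I → I → ℂ := fun a b => f a * conj (g b)

/-- `Tr(n̂ T)` for a diagonal density with diagonal `ν`. -/
noncomputable def trN (ν : I → ℝ) (T : I → I → ℂ) : ℂ := ∑' e : I, (ν e : ℂ) * T e e

lemma sandwich (e : I) (T T' : I → I → ℂ) (a b : I) :
    matMul (matMul (matMul (Pmat e) T) (Pmat e)) T' a b
      = if a = e then T e e * T' e b else 0 := by
  have h1 : ∀ c, matMul (Pmat e) T a c = if a = e then T e c else 0 := by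
    intro c
    unfold matMul Pmat
    rw [show (fun d => (if a = e ∧ d = e then (1:ℂ) else 0) * T d c)
        = fun d => if d = e then (if a = e then T e c else 0) else 0 by
      funext d; by_cases hd : d = e <;> by_cases ha : a = e <;> simp [hd, ha]]
    exact tsum_ite_eq e _
  have h2 : ∀ c, matMul (matMul (Pmat e) T) (Pmat e) a c
      = if a = e ∧ c = e then T e e else 0 := by
    intro c
    show (∑' d : I, matMul (Pmat e) T a d * Pmat e d c) = _
    rw [show (fun d => matMul (Pmat e) T a d * Pmat e d c)
        = fun d => if d = e then (if a = e ∧ c = e then T e e else 0) else 0 by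
      funext d
      rw [h1]
      by_cases hd : d = e <;> by_cases ha : a = e <;> by_cases hc : c = e <;>
        simp [Pmat, hd, ha, hc]]
    exact tsum_ite_eq e _
  show (∑' c : I, matMul (matMul (Pmat e) T) (Pmat e) a c * T' c b) = _
  rw [show (fun c => matMul (matMul (Pmat e) T) (Pmat e) a c * T' c b)
      = fun c => if c = e then (if a = e then T e e * T' e b else 0) else 0 by
    funext c
    rw [h2]
    by_cases hc : c = e <;> by_cases ha : a = e <;> simp [hc, ha]]
  exact tsum_ite_eq e _

lemma starProd_apply (T T' : I → I → ℂ) (a b : I) :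
    starProd T T' a b = ((2 * Real.pi : ℝ) : ℂ) * (T a a * T' a b) := by
  unfold starProd
  congr 1
  rw [show (fun e => matMul (matMul (matMul (Pmat e) T) (Pmat e)) T' a b)
      = fun e => if e = a then T a a * T' a b else 0 by
    funext e
    rw [sandwich]
    by_cases h : a = e
    · subst h; simp
    · simp [h, Ne.symm h]]
  exact tsum_ite_eq a _

lemma fold_diag (L : List (I → I → ℂ)) (T : I → I → ℂ) (a : I) :
    (L.foldl starProd T) a a
      = ((2 * Real.pi : ℝ) : ℂ) ^ L.length * (T a a * (L.map (fun U => U a a)).prod) := by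
  induction L generalizing T with
  | nil => simp
  | cons x L ih =>
    simp only [List.foldl_cons, ih, starProd_apply, List.length_cons, List.map_cons,
      List.prod_cons]
    ring

/-- for rank-one operators `T_i = |f_i⟩⟨g_i|` (here `n+1` of
them, `i = 0,…,n`),
`Tr[n̂ (T₀ * ⋯ * T_n)] = (2π)^n ∑_e ⟨g_n, P_e n̂ f₀⟩ ∏_{l=0}^{n-1} ⟨g_l, P_e f_{l+1}⟩`. -/
theorem stmt_12 (ν : I → ℝ) (hν : ∀ e, 0 ≤ ν e) (n : ℕ)
    (f g : Fin (n + 1) → I → ℂ) :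
    trN ν ((List.ofFn (fun i : Fin n => rankOne (f i.succ) (g i.succ))).foldl
        starProd (rankOne (f 0) (g 0)))
      = ((2 * Real.pi : ℝ) : ℂ) ^ n *
          ∑' e : I, (conj (g (Fin.last n) e) * (ν e : ℂ) * f 0 e) *
            ∏ l : Fin n, (conj (g l.castSucc e) * f l.succ e) := by
  unfold trN
  rw [← tsum_mul_left]
  apply tsum_congr
  intro e
  rw [fold_diag]
  simp only [List.length_ofFn, List.map_ofFn]
  rw [List.prod_ofFn]
  have key : (ν e : ℂ) * (rankOne (f 0) (g 0) e e *
        ∏ i : Fin n, rankOne (f i.succ) (g i.succ) e e)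
      = (conj (g (Fin.last n) e) * (ν e : ℂ) * f 0 e) *
        ∏ l : Fin n, (conj (g l.castSucc e) * f l.succ e) := by
    simp only [rankOne, Finset.prod_mul_distrib]
    have hg : conj (g 0 e) * ∏ i : Fin n, conj (g i.succ e)
        = (∏ l : Fin n, conj (g l.castSucc e)) * conj (g (Fin.last n) e) := by
      rw [← Fin.prod_univ_succ (fun j : Fin (n+1) => conj (g j e)),
        Fin.prod_univ_castSucc (fun j : Fin (n+1) => conj (g j e))]
    calc (ν e : ℂ) * (f 0 e * conj (g 0 e) *
          ((∏ i : Fin n, f i.succ e) * ∏ i : Fin n, conj (g i.succ e)))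
        = (ν e : ℂ) * f 0 e * (conj (g 0 e) * ∏ i : Fin n, conj (g i.succ e))
            * ∏ i : Fin n, f i.succ e := by ring
      _ = _ := by rw [hg]; ring
  simp only [Function.comp] at *
  linear_combination (((2 * Real.pi : ℝ) : ℂ) ^ n) * key
end
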